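/- arXiv:1602.06876 — 3 statements merged into one kernel-verified Lean document; each statement's English description precedes it below -/
import Mathlib

section
/- (Push-the-button algorithm, type A.) Let G be the path graph on n vertices (vertices 0, 1, ..., n−1, with i adjacent to i+1). Then every circling on G is F-related to a circling with at most one circled vertex. -/
open Classical in
/-- The push operation `F i` at a circled vertex `i`: reverse the circling of every
vertex adjacent to `i`. -/
noncomputable def push {V : Type*} (G : SimpleGraph V) (i : V) (c : V → ZMod 2) :
    V → ZMod 2 :=
  fun j => if G.Adj i j then c j + 1 else c j

/-- A single push step between circlings: some circled vertex is pushed. -/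
def PushStep {V : Type*} (G : SimpleGraph V) (c c' : V → ZMod 2) : Prop :=
  ∃ i, c i = 1 ∧ c' = push G i c

/-- Two circlings are `F`-related if a finite sequence of push operations transforms
one into the other. -/
def FRelated {V : Type*} (G : SimpleGraph V) : (V → ZMod 2) → (V → ZMod 2) → Prop :=
  Relation.ReflTransGen (PushStep G)

/-!
On the path, pushing `i` adds the circlings at `i - 1` and `i + 1`. Pushing `p, p + 1, …, q - 1`
in turn therefore moves a circled pair `p < q` with nothing circled strictly between them to
`(p - 1, q - 1)`. When nothing is circled left of `p`, `p` such shifts bring the pair to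
`(0, q - p)`, and one more shift, whose left end `-1` falls off the path, leaves only `q - p - 1`
circled. So the two leftmost circled vertices can always be traded for one, and induction on the
number of circled vertices finishes the proof.
-/

open SimpleGraph

lemma zmod_two_eq_zero_of_ne_one {x : ZMod 2} (h : x ≠ 1) : x = 0 := by
  revert x; decide

lemma Set.ncard_lt_of_subset_insert_diff_pair {α : Type*} [Finite α] {s t : Set α} {w x y : α}
    (hx : x ∈ t) (hy : y ∈ t) (hxy : x ≠ y) (hst : s ⊆ insert w (t \ {x, y})) :
    s.ncard < t.ncard := by
  have hpair : {x, y} ⊆ t := Set.pair_subset hx hy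
  have htwo : 2 ≤ t.ncard := Set.ncard_pair hxy ▸ Set.ncard_le_ncard hpair
  calc s.ncard ≤ (insert w (t \ {x, y})).ncard := Set.ncard_le_ncard hst
    _ ≤ (t \ {x, y}).ncard + 1 := Set.ncard_insert_le _ _
    _ = t.ncard - 2 + 1 := by rw [Set.ncard_sdiff hpair, Set.ncard_pair hxy]
    _ < t.ncard := by omega

section PathGraph

variable {n : ℕ}

/-- Positions outside `[0, n)` give the zero circling, so the ends of the path need no special
treatment. -/
def circledAt (k : ℤ) : Fin n → ZMod 2 := fun v => if (v : ℤ) = k then 1 else 0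

lemma circledAt_apply (k : ℤ) (v : Fin n) : circledAt k v = if (v : ℤ) = k then 1 else 0 := rfl

lemma push_pathGraph (i : Fin n) (c : Fin n → ZMod 2) :
    push (pathGraph n) i c = c + circledAt (i - 1) + circledAt (i + 1) := by
  funext v
  simp only [push, pathGraph_adj, circledAt_apply, Pi.add_apply]
  split_ifs <;> (try simp) <;> omega

lemma fRelated_pathGraph_push {c : Fin n → ZMod 2} {i : Fin n} (hi : c i = 1) :
    FRelated (pathGraph n) c (c + circledAt (i - 1) + circledAt (i + 1)) :=
  push_pathGraph i c ▸ .single ⟨i, hi, rfl⟩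

lemma fRelated_shift_pair {c : Fin n → ZMod 2} {p q : Fin n} (hpq : p < q) (hp : c p = 1)
    (hq : c q = 1) (hgap : ∀ v, p < v → v < q → c v = 0) :
    FRelated (pathGraph n) c
      (c + circledAt (p - 1) + circledAt p + circledAt (q - 1) + circledAt q) := by
  obtain ⟨d, hd⟩ : ∃ d, (q : ℕ) = p + d + 1 := ⟨q - p - 1, by omega⟩
  induction d generalizing p c with
  | zero =>
    have hq' : (q : ℤ) = p + 1 := by omega
    convert fRelated_pathGraph_push hp using 1
    rw [hq', add_sub_cancel_right]
    linear_combination ZModModule.add_self (circledAt (n := n) p)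
  | succ d ih =>
    obtain ⟨p', hp'⟩ : ∃ p' : Fin n, (p' : ℕ) = p + 1 := ⟨⟨p + 1, by omega⟩, rfl⟩
    have hpp' : p < p' := by rw [Fin.lt_def]; omega
    have rest := ih (c := c + circledAt (p - 1) + circledAt (p + 1)) (p := p')
      (by rw [Fin.lt_def]; omega) ?_ ?_ ?_ (by omega)
    · have h : FRelated (pathGraph n) c _ := (fRelated_pathGraph_push hp).trans rest
      convert h using 1
      rw [hp']
      push_cast
      rw [add_sub_cancel_right]
      linear_combination -ZModModule.add_self (circledAt (n := n) (p + 1))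
    · simp only [Pi.add_apply, circledAt_apply, hgap p' hpp' (by rw [Fin.lt_def]; omega)]
      split_ifs <;> first | omega | decide
    · simp only [Pi.add_apply, circledAt_apply, hq]
      split_ifs <;> first | omega | decide
    · intro v hv1 hv2
      rw [Fin.lt_def] at hv1
      simp only [Pi.add_apply, circledAt_apply, hgap v (hpp'.trans hv1) hv2]
      split_ifs <;> first | omega | decide

lemma fRelated_collapse_leftmost_pair {c : Fin n → ZMod 2} {p q : Fin n} (hpq : p < q)
    (hp : c p = 1) (hq : c q = 1) (hbelow : ∀ v < p, c v = 0)
    (hgap : ∀ v, p < v → v < q → c v = 0) :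
    FRelated (pathGraph n) c (c + circledAt p + circledAt q + circledAt (q - p - 1)) := by
  induction hk : (p : ℕ) generalizing p q c with
  | zero =>
    have hneg : circledAt (n := n) (p - 1) = 0 := by
      funext v; simp only [circledAt_apply]; rw [if_neg (by omega)]; rfl
    convert fRelated_shift_pair hpq hp hq hgap using 1
    rw [hneg, hk]
    push_cast
    abel
  | succ k ih =>
    obtain ⟨p', hp'⟩ : ∃ p' : Fin n, (p' : ℕ) = k := ⟨⟨k, by omega⟩, rfl⟩
    obtain ⟨q', hq'⟩ : ∃ q' : Fin n, (q' : ℕ) = q - 1 := ⟨⟨q - 1, by omega⟩, rfl⟩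
    rw [Fin.lt_def] at hpq
    have rest := ih (c := c + circledAt (p - 1) + circledAt p + circledAt (q - 1) + circledAt q)
      (p := p') (q := q') (by rw [Fin.lt_def]; omega) ?_ ?_ ?_ ?_ hp'
    · have h : FRelated (pathGraph n) c _ := (fRelated_shift_pair hpq hp hq hgap).trans rest
      convert h using 1
      rw [hq', hk, Nat.cast_sub (by omega)]
      push_cast
      rw [add_sub_cancel_right, show (q : ℤ) - 1 - k - 1 = q - (k + 1) - 1 by ring]
      linear_combination -ZModModule.add_self (circledAt (n := n) k) -
        ZModModule.add_self (circledAt (n := n) (q - 1))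
    · simp only [Pi.add_apply, circledAt_apply, hbelow p' (by rw [Fin.lt_def]; omega)]
      split_ifs <;> first | omega | decide
    · obtain rfl | hne := eq_or_ne q' p
      · simp only [Pi.add_apply, circledAt_apply, hp]
        split_ifs <;> first | omega | decide
      · have hq'p : p < q' := by rw [Fin.lt_def]; have := Fin.val_ne_of_ne hne; omega
        simp only [Pi.add_apply, circledAt_apply, hgap q' hq'p (by rw [Fin.lt_def]; omega)]
        split_ifs <;> first | omega | decide
    · intro v hv
      rw [Fin.lt_def] at hv
      simp only [Pi.add_apply, circledAt_apply, hbelow v (by rw [Fin.lt_def]; omega)]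
      split_ifs <;> first | omega | decide
    · intro v hv1 hv2
      rw [Fin.lt_def] at hv1 hv2
      obtain rfl | hne := eq_or_ne v p
      · simp only [Pi.add_apply, circledAt_apply, hp]
        split_ifs <;> first | omega | decide
      · have hv : p < v := by rw [Fin.lt_def]; have := Fin.val_ne_of_ne hne; omega
        simp only [Pi.add_apply, circledAt_apply, hgap v hv (by rw [Fin.lt_def]; omega)]
        split_ifs <;> first | omega | decide

lemma exists_fRelated_ncard_lt {c : Fin n → ZMod 2} (hc : 2 ≤ {v | c v = 1}.ncard) :
    ∃ c', FRelated (pathGraph n) c c' ∧ {v | c' v = 1}.ncard < {v | c v = 1}.ncard := by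
  obtain ⟨p, hp : c p = 1, hpmin⟩ := Set.exists_min_image {v | c v = 1} id (Set.toFinite _)
    (Set.nonempty_of_ncard_ne_zero (by omega))
  have hcard : ({v | c v = 1} \ {p}).ncard ≠ 0 := by
    rw [Set.ncard_sdiff_singleton_of_mem (s := {v | c v = 1}) hp]; omega
  obtain ⟨q, ⟨hq : c q = 1, hqp⟩, hqmin⟩ :=
    Set.exists_min_image _ id (Set.toFinite _) (Set.nonempty_of_ncard_ne_zero hcard)
  have hpq : p < q := lt_of_le_of_ne (hpmin q hq) (Ne.symm hqp)
  have hbelow : ∀ v < p, c v = 0 := fun v hv =>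
    zmod_two_eq_zero_of_ne_one fun hv1 => (hpmin v hv1).not_gt hv
  have hgap : ∀ v, p < v → v < q → c v = 0 := fun v hpv hvq =>
    zmod_two_eq_zero_of_ne_one fun hv1 => (hqmin v ⟨hv1, hpv.ne'⟩).not_gt hvq
  refine ⟨_, fRelated_collapse_leftmost_pair hpq hp hq hbelow hgap, ?_⟩
  obtain ⟨w, hw⟩ : ∃ w : Fin n, (w : ℕ) = q - p - 1 := ⟨⟨q - p - 1, by omega⟩, rfl⟩
  refine Set.ncard_lt_of_subset_insert_diff_pair (w := w) hp hq hpq.ne fun v hv => ?_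
  refine or_iff_not_imp_left.2 fun hvw => ?_
  have hvw : (v : ℤ) ≠ q - p - 1 := by have := Fin.val_ne_of_ne hvw; omega
  have hvp : (v : ℕ) ≠ p := by
    rintro hvp
    obtain rfl := Fin.ext hvp
    simp [circledAt_apply, hp, hvw, Fin.val_ne_of_ne hpq.ne] at hv
  have hvq : (v : ℕ) ≠ q := by
    rintro hvq
    obtain rfl := Fin.ext hvq
    simp [circledAt_apply, hq, hvw, Fin.val_ne_of_ne hpq.ne'] at hv
  simpa [circledAt_apply, hvw, hvp, hvq, Fin.ext_iff] using hv

end PathGraph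

/-- Push-the-button algorithm for the path graph (type `A`): every circling is
`F`-related to one with at most one circled vertex. -/
theorem fRelated_ncard_le_one_pathGraph (n : ℕ) (c : Fin n → ZMod 2) :
    ∃ c' : Fin n → ZMod 2,
      FRelated (SimpleGraph.pathGraph n) c c' ∧ {v | c' v = 1}.ncard ≤ 1 := by
  induction hk : {v | c v = 1}.ncard using Nat.strong_induction_on generalizing c with
  | _ k ih =>
    by_cases hk1 : k ≤ 1
    · exact ⟨c, .refl, hk ▸ hk1⟩
    obtain ⟨c₁, hcc₁, hlt⟩ := exists_fRelated_ncard_lt (c := c) (by omega)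
    obtain ⟨c₂, hc₁c₂, hc₂⟩ := ih _ (hk ▸ hlt) c₁ rfl
    exact ⟨c₂, hcc₁.trans hc₁c₂, hc₂⟩
end

section
/- (Combinatorial Borel–de Siebenthal theorem for disjoint unions of paths.) Let G be a finite simple graph each of whose connected components is a path (i.e., the subgraph induced on each connected component is isomorphic to a path graph). Then every circling on G is F-related to a circling having at most one circled vertex in each connected component; in particular, every circling is F-related to a circling whose total number of circled vertices is at most the number of connected components of G. -/
/-!
On the path `0 — 1 — ⋯ — (n - 1)` a push at `i` toggles `i - 1` and `i + 1`. If `i < j` are the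
two lowest circled vertices, pushing at `i, i + 1, …, j - 1` moves the two circles to `i - 1` and
`j - 1`; after `i + 1` such slides the lower circle has dropped off the end of the path and a
single circle at `j - i - 1` has replaced the two, with nothing above `j` changed. Sweeping the
path from left to right therefore leaves at most one circle. Pushes inside a connected component
do not touch the other components, so the components can be reduced one at a time.
-/

namespace PathCircling

variable {n : ℕ}

/-- The circling of `pathGraph n` with the single vertex `k` circled; it vanishes when
`k ∉ [0, n)`, which lets neighbours of the end vertices be written as `i - 1` and `i + 1`. -/
def single (k : ℤ) : Fin n → ZMod 2 := fun v => if (v : ℤ) = k then 1 else 0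

lemma single_apply_of_ne {k : ℤ} {v : Fin n} (h : (v : ℤ) ≠ k) : single k v = 0 := if_neg h

lemma single_apply_self (v : Fin n) : single v v = 1 := if_pos rfl

lemma single_eq_one_iff {k : ℤ} {v : Fin n} : single k v = 1 ↔ (v : ℤ) = k := by
  unfold single
  split_ifs <;> simp_all

lemma single_of_neg {k : ℤ} (hk : k < 0) : (single k : Fin n → ZMod 2) = 0 :=
  funext fun v => single_apply_of_ne (by omega)

lemma zmod_two_eq_zero_of_ne_one {x : ZMod 2} (h : x ≠ 1) : x = 0 := by
  revert x; decide

lemma pushStep_pathGraph {c : Fin n → ZMod 2} {i : Fin n} (hi : c i = 1) :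
    PushStep (SimpleGraph.pathGraph n) c (c + single (i - 1) + single (i + 1)) := by
  refine ⟨i, hi, funext fun v => ?_⟩
  simp only [push, SimpleGraph.pathGraph_adj, Pi.add_apply, single]
  split_ifs <;> grind

/-- Pushing successively at `i, i + 1, …, j - 1` moves the circle at `i` along the empty
stretch up to `j`. -/
lemma fRelated_slide {c : Fin n → ZMod 2} {i j : Fin n} (hij : i < j) (hi : c i = 1)
    (hgap : ∀ v, i < v → v < j → c v = 0) :
    FRelated (SimpleGraph.pathGraph n) c
      (c + single (i - 1) + single i + single (j - 1) + single j) := by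
  rw [Fin.lt_def] at hij
  obtain ⟨d, hd⟩ : ∃ d, (j : ℕ) = i + 1 + d := ⟨j - (i + 1), by omega⟩
  induction d generalizing c i with
  | zero =>
    have hj : ((j : ℕ) : ℤ) = i + 1 := by omega
    have hc' : c + single (i - 1) + single i + single (j - 1) + single j =
        c + single (i - 1) + single (i + 1) := by
      funext v
      simp only [Pi.add_apply, hj, add_sub_cancel_right]
      grind
    rw [hc']
    exact .single (pushStep_pathGraph hi)
  | succ d ih =>
    set i' : Fin n := ⟨i + 1, by omega⟩
    have hi'v : ((i' : ℕ) : ℤ) = i + 1 := by simp [i']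
    set c₀ := c + single (i - 1) + single (i + 1)
    have hi' : c₀ i' = 1 := by
      have := hgap i' (by simp [Fin.lt_def, i']) (by rw [Fin.lt_def]; simp [i']; omega)
      simp only [c₀, Pi.add_apply, this, single_apply_of_ne (v := i') (k := i - 1) (by omega),
        ← hi'v, single_apply_self]
      decide
    have hgap' : ∀ v, i' < v → v < j → c₀ v = 0 := by
      intro v hv hvj
      rw [Fin.lt_def] at hv
      simp only [i'] at hv
      simp only [c₀, Pi.add_apply, hgap v (by rw [Fin.lt_def]; omega) hvj,
        single_apply_of_ne (v := v) (k := i - 1) (by omega),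
        single_apply_of_ne (v := v) (k := i + 1) (by omega)]
      decide
    have hc' : c₀ + single (i' - 1) + single i' + single (j - 1) + single j =
        c + single (i - 1) + single i + single (j - 1) + single j := by
      funext v
      simp only [Pi.add_apply, c₀, hi'v, add_sub_cancel_right]
      grind
    have h := ih (i := i') (by simp [i']; omega) hi' hgap' (by simp [i']; omega)
    rw [hc'] at h
    exact .head (pushStep_pathGraph hi) h

lemma apply_eq_single_of_lowest {c : Fin n → ZMod 2} {i j v : Fin n} (hi : c i = 1)
    (hbelow : ∀ v, v < j → v ≠ i → c v = 0) (hv : v < j) : c v = single i v := by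
  by_cases h : v = i
  · rw [h, hi, single_apply_self]
  · rw [hbelow v hv h, single_apply_of_ne (by omega)]

lemma slide_apply_of_le {c : Fin n → ZMod 2} {i j v : Fin n} (hij : i < j) (hi : c i = 1)
    (hj : c j = 1) (hbelow : ∀ v, v < j → v ≠ i → c v = 0) (hv : v ≤ j) :
    (c + single (i - 1) + single i + single (j - 1) + single j : Fin n → ZMod 2) v =
      single (i - 1) v + single (j - 1) v := by
  simp only [Pi.add_apply]
  rcases hv.lt_or_eq with hv | rfl
  · rw [apply_eq_single_of_lowest hi hbelow hv, single_apply_of_ne (k := j) (by omega)]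
    grind
  · rw [hj, single_apply_self, single_apply_of_ne (k := i) (by omega)]
    grind

/-- Sliding the two lowest circles `i < j` down `i + 1` times removes the lower one: the upper
one ends up at `j - i - 1`. -/
lemma fRelated_add_singles_of_lowest {c : Fin n → ZMod 2} {i j : Fin n} (hij : i < j)
    (hi : c i = 1) (hj : c j = 1) (hbelow : ∀ v, v < j → v ≠ i → c v = 0) :
    FRelated (SimpleGraph.pathGraph n) c (c + single i + single j + single (j - i - 1)) := by
  obtain ⟨k, hk⟩ : ∃ k, (i : ℕ) = k := ⟨_, rfl⟩
  induction k generalizing c i j with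
  | zero =>
    have hslide := fRelated_slide hij hi fun v hiv hvj => hbelow v hvj (ne_of_gt hiv)
    have hi0 : ((i : ℕ) : ℤ) = 0 := by omega
    rw [hi0, zero_sub, single_of_neg (by norm_num)] at hslide
    have heq : c + 0 + single 0 + single (j - 1) + single j =
        c + single i + single j + single (j - i - 1) := by
      funext v
      simp only [hi0, sub_zero, Pi.add_apply, Pi.zero_apply]
      grind
    rwa [heq] at hslide
  | succ k ih =>
    have hslide := fRelated_slide hij hi fun v hiv hvj => hbelow v hvj (ne_of_gt hiv)
    rw [Fin.lt_def] at hij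
    set c₁ := c + single (i - 1) + single i + single (j - 1) + single j
    have hc₁ : ∀ v, v ≤ j → c₁ v = single (i - 1) v + single (j - 1) v :=
      fun v => slide_apply_of_le (Fin.lt_def.mpr hij) hi hj hbelow
    set i₀ : Fin n := ⟨k, by omega⟩
    set j₀ : Fin n := ⟨j - 1, by omega⟩
    have hi₀ : ((i₀ : ℕ) : ℤ) = i - 1 := by simp [i₀]; omega
    have hj₀ : ((j₀ : ℕ) : ℤ) = j - 1 := by simp [j₀]; omega
    have hc₁i₀ : c₁ i₀ = 1 := by
      rw [hc₁ i₀ (by rw [Fin.le_def]; omega), ← hi₀, single_apply_self,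
        single_apply_of_ne (by omega), add_zero]
    have hc₁j₀ : c₁ j₀ = 1 := by
      rw [hc₁ j₀ (by rw [Fin.le_def]; omega), ← hj₀, single_apply_self,
        single_apply_of_ne (by omega), zero_add]
    have hgap₁ : ∀ v, v < j₀ → v ≠ i₀ → c₁ v = 0 := by
      intro v hv hvi
      rw [Fin.lt_def] at hv
      rw [ne_eq, Fin.ext_iff] at hvi
      rw [hc₁ v (by rw [Fin.le_def]; omega), single_apply_of_ne (by omega),
        single_apply_of_ne (by omega), add_zero]
    have hmerge := ih (c := c₁) (i := i₀) (j := j₀)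
      (by rw [Fin.lt_def]; simp [i₀, j₀]; omega) hc₁i₀ hc₁j₀ hgap₁ rfl
    have heq : c₁ + single i₀ + single j₀ + single (j₀ - i₀ - 1) =
        c + single i + single j + single (j - i - 1) := by
      funext v
      simp only [c₁, hi₀, hj₀, Pi.add_apply, sub_sub_sub_cancel_right]
      grind
    rw [heq] at hmerge
    exact hslide.trans hmerge

lemma fRelated_merge_lowest {c : Fin n → ZMod 2} {i j : Fin n} (hij : i < j) (hi : c i = 1)
    (hj : c j = 1) (hbelow : ∀ v, v < j → v ≠ i → c v = 0) :
    FRelated (SimpleGraph.pathGraph n) c fun v => if v ≤ j then single (j - i - 1) v else c v := by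
  convert fRelated_add_singles_of_lowest hij hi hj hbelow using 1
  funext v
  simp only [Pi.add_apply]
  rcases lt_trichotomy v j with hv | rfl | hv
  · rw [if_pos hv.le, apply_eq_single_of_lowest hi hbelow hv, single_apply_of_ne (k := j) (by omega)]
    grind
  · rw [if_pos le_rfl, hj, single_apply_self, single_apply_of_ne (k := i) (by omega)]
    grind
  · rw [if_neg (not_le.mpr hv), single_apply_of_ne (by omega), single_apply_of_ne (by omega),
      single_apply_of_ne (by omega)]
    grind

lemma exists_fRelated_subsingleton_below (c : Fin n → ZMod 2) (t : ℕ) :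
    ∃ c', FRelated (SimpleGraph.pathGraph n) c c' ∧ (∀ v : Fin n, t ≤ v → c' v = c v) ∧
      {v : Fin n | (v : ℕ) < t ∧ c' v = 1}.Subsingleton := by
  induction t with
  | zero => exact ⟨c, .refl, fun _ _ => rfl, by simp⟩
  | succ t ih =>
    obtain ⟨c', hrel, hagree, hsub⟩ := ih
    by_cases ht : t < n
    swap
    · refine ⟨c', hrel, fun v hv => by omega, fun u hu v hv => hsub ?_ ?_⟩
      · exact ⟨by omega, hu.2⟩
      · exact ⟨by omega, hv.2⟩
    set w : Fin n := ⟨t, ht⟩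
    by_cases hw : c' w = 1
    swap
    · have hlt : ∀ u : Fin n, c' u = 1 → (u : ℕ) < t + 1 → (u : ℕ) < t := fun u hu hut =>
        lt_of_le_of_ne (Nat.lt_succ_iff.mp hut) fun h =>
          hw (by rwa [show u = w from Fin.ext h] at hu)
      exact ⟨c', hrel, fun v hv => hagree v (by omega),
        fun u hu v hv => hsub ⟨hlt u hu.2 hu.1, hu.2⟩ ⟨hlt v hv.2 hv.1, hv.2⟩⟩
    by_cases hlow : ∃ i : Fin n, (i : ℕ) < t ∧ c' i = 1
    · obtain ⟨i, hit, hi⟩ := hlow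
      have hbelow : ∀ v, v < w → v ≠ i → c' v = 0 := fun v hv hvi =>
        zmod_two_eq_zero_of_ne_one fun h => hvi (hsub ⟨hv, h⟩ ⟨hit, hi⟩)
      refine ⟨_, hrel.trans (fRelated_merge_lowest hit hi hw hbelow), fun v hv => ?_, ?_⟩
      · rw [if_neg (by rw [Fin.le_def]; simp [w]; omega), hagree v (by omega)]
      · rintro u ⟨hu, hu1⟩ v ⟨hv, hv1⟩
        rw [if_pos (by rw [Fin.le_def]; simp [w]; omega), single_eq_one_iff] at hu1 hv1
        omega
    · refine ⟨c', hrel, fun v hv => hagree v (by omega), ?_⟩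
      rintro u ⟨hu, hu1⟩ v ⟨hv, hv1⟩
      have hut : ¬(u : ℕ) < t := fun h => hlow ⟨u, h, hu1⟩
      have hvt : ¬(v : ℕ) < t := fun h => hlow ⟨v, h, hv1⟩
      exact Fin.ext (by omega)

lemma exists_fRelated_pathGraph_subsingleton (c : Fin n → ZMod 2) :
    ∃ c', FRelated (SimpleGraph.pathGraph n) c c' ∧ {v | c' v = 1}.Subsingleton := by
  obtain ⟨c', hrel, -, hsub⟩ := exists_fRelated_subsingleton_below c n
  exact ⟨c', hrel, fun u hu v hv => hsub ⟨u.isLt, hu⟩ ⟨v.isLt, hv⟩⟩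

end PathCircling

section Transfer

variable {V W : Type*} {G : SimpleGraph V} {H : SimpleGraph W}

lemma push_extend (f : H ↪g G) (hf : ∀ x v, G.Adj (f x) v → v ∈ Set.range f) (i : W)
    (a : W → ZMod 2) (c : V → ZMod 2) :
    push G (f i) (Function.extend f a c) = Function.extend f (push H i a) c := by
  funext v
  by_cases hv : ∃ x, f x = v
  · obtain ⟨x, rfl⟩ := hv
    simp only [push, f.injective.extend_apply]
    rw [f.map_adj_iff]
  · simp only [push, Function.extend_apply' _ _ _ hv, ite_eq_right_iff]
    exact fun hadj => absurd (hf i v hadj) hv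

lemma FRelated.extend (f : H ↪g G) (hf : ∀ x v, G.Adj (f x) v → v ∈ Set.range f)
    {a b : W → ZMod 2} (h : FRelated H a b) (c : V → ZMod 2) :
    FRelated G (Function.extend f a c) (Function.extend f b c) := by
  induction h with
  | refl => exact .refl
  | tail _ hstep ih =>
    obtain ⟨i, hi, rfl⟩ := hstep
    exact ih.tail ⟨f i, by rwa [f.injective.extend_apply], (push_extend f hf i _ c).symm⟩

end Transfer

lemma SimpleGraph.ConnectedComponent.exists_fRelated_subsingleton {V : Type*} {G : SimpleGraph V}
    (K : G.ConnectedComponent) {n : ℕ} (e : G.induce K.supp ≃g SimpleGraph.pathGraph n)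
    (c : V → ZMod 2) :
    ∃ c', FRelated G c c' ∧ (∀ v ∉ K.supp, c' v = c v) ∧
      {v | c' v = 1 ∧ v ∈ K.supp}.Subsingleton := by
  set f : SimpleGraph.pathGraph n ↪g G :=
    (SimpleGraph.Embedding.induce K.supp).comp e.symm.toEmbedding
  have hrange : Set.range f = K.supp := by
    ext v
    refine ⟨fun ⟨x, hx⟩ => hx ▸ (e.symm x).2, fun hv => ⟨e ⟨v, hv⟩, by simp [f]⟩⟩
  have hf : ∀ x v, G.Adj (f x) v → v ∈ Set.range f := fun x v hadj =>
    hrange ▸ K.mem_supp_of_adj_mem_supp (hrange ▸ Set.mem_range_self x) hadj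
  obtain ⟨b, hrel, hsub⟩ := PathCircling.exists_fRelated_pathGraph_subsingleton (c ∘ f)
  have hc : Function.extend f (c ∘ f) c = c := by
    funext v
    by_cases hv : ∃ x, f x = v
    · obtain ⟨x, rfl⟩ := hv
      exact f.injective.extend_apply _ _ x
    · exact Function.extend_apply' _ _ _ hv
  have hrel' := hrel.extend f hf c
  rw [hc] at hrel'
  refine ⟨Function.extend f b c, hrel', fun v hv => ?_, ?_⟩
  · exact Function.extend_apply' _ _ _ (by rwa [← Set.mem_range, hrange])
  · rintro _ ⟨hu, hu'⟩ _ ⟨hv, hv'⟩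
    rw [← hrange] at hu' hv'
    obtain ⟨x, rfl⟩ := hu'
    obtain ⟨y, rfl⟩ := hv'
    rw [f.injective.extend_apply] at hu hv
    rw [hsub hu hv]

lemma exists_fRelated_subsingleton_of_components {V : Type*} {G : SimpleGraph V}
    (hpath : ∀ K : G.ConnectedComponent,
      ∃ n : ℕ, Nonempty (G.induce K.supp ≃g SimpleGraph.pathGraph n))
    (S : Finset G.ConnectedComponent) (c : V → ZMod 2) :
    ∃ c', FRelated G c c' ∧ ∀ K ∈ S, {v | c' v = 1 ∧ v ∈ K.supp}.Subsingleton := by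
  classical
  induction S using Finset.induction_on generalizing c with
  | empty => exact ⟨c, .refl, by simp⟩
  | @insert K S hKS ih =>
    obtain ⟨c₁, hrel₁, hS⟩ := ih c
    obtain ⟨n, ⟨e⟩⟩ := hpath K
    obtain ⟨c₂, hrel₂, hout, hK⟩ := K.exists_fRelated_subsingleton e c₁
    refine ⟨c₂, hrel₁.trans hrel₂, (Finset.forall_mem_insert _ _ _).mpr ⟨hK, fun K' hK' => ?_⟩⟩
    have hdisj : ∀ v ∈ K'.supp, v ∉ K.supp := fun v hv hvK =>
      hKS (((K.mem_supp_iff v).mp hvK).symm.trans ((K'.mem_supp_iff v).mp hv) ▸ hK')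
    have hset : {v | c₂ v = 1 ∧ v ∈ K'.supp} = {v | c₁ v = 1 ∧ v ∈ K'.supp} := by
      ext v
      exact and_congr_left fun hv => by rw [hout v (hdisj v hv)]
    exact hset ▸ hS K' hK'

/-- Combinatorial Borel–de Siebenthal theorem for disjoint unions of paths: if every
connected component of `G` induces a path graph, then every circling is `F`-related to
one with at most one circled vertex in each connected component; in particular to one
whose total number of circled vertices is at most the number of connected components. -/
theorem fRelated_reduced_of_components_path {V : Type*} [Fintype V] (G : SimpleGraph V)
    (hpath : ∀ K : G.ConnectedComponent,
      ∃ n : ℕ, Nonempty (G.induce K.supp ≃g SimpleGraph.pathGraph n))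
    (c : V → ZMod 2) :
    ∃ c' : V → ZMod 2, FRelated G c c' ∧
      (∀ K : G.ConnectedComponent, {v | c' v = 1 ∧ v ∈ K.supp}.ncard ≤ 1) ∧
      {v | c' v = 1}.ncard ≤ Nat.card G.ConnectedComponent := by
  classical
  obtain ⟨c', hrel, hsub⟩ := exists_fRelated_subsingleton_of_components hpath Finset.univ c
  have hK : ∀ K : G.ConnectedComponent, {v | c' v = 1 ∧ v ∈ K.supp}.Subsingleton :=
    fun K => hsub K (Finset.mem_univ K)
  refine ⟨c', hrel, fun K => Set.ncard_le_one_iff_subsingleton.mpr (hK K), ?_⟩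
  calc {v | c' v = 1}.ncard ≤ (Set.univ : Set G.ConnectedComponent).ncard :=
        Set.ncard_le_ncard_of_injOn G.connectedComponentMk (fun _ _ => trivial)
          fun u hu v hv huv => hK (G.connectedComponentMk u) ⟨hu, rfl⟩ ⟨hv, huv.symm⟩
    _ = Nat.card G.ConnectedComponent := Set.ncard_univ _
end

section
/- (Push-the-button algorithm, type D.) Let n ≥ 4 and let G be the tree on vertices {1, 2, ..., n} whose edges are {1,3}, {2,3}, and {k, k+1} for 3 ≤ k ≤ n−1 (the Dynkin diagram of type D_n, viewed as a simple graph). Then every circling on G is F-related to a circling with at most one circled vertex. -/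
/-- The Dynkin diagram of type `D n`, viewed as a simple graph on vertices
`{1, …, n}` (vertex `v : Fin n` has label `v.val + 1`), with edges `{1,3}`, `{2,3}`
and `{k, k+1}` for `3 ≤ k ≤ n - 1`. -/
def dynkinD (n : ℕ) : SimpleGraph (Fin n) :=
  SimpleGraph.fromRel fun u v =>
    (u.val + 1 = 1 ∧ v.val + 1 = 3) ∨ (u.val + 1 = 2 ∧ v.val + 1 = 3) ∨
      (3 ≤ u.val + 1 ∧ v.val + 1 = u.val + 1 + 1)

section Lift

variable {V W : Type*}

lemma push_comap (G : SimpleGraph V) (f : W → V) (i : W) (c : V → ZMod 2) :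
    push (G.comap f) i (c ∘ f) = push G (f i) c ∘ f :=
  rfl

theorem FRelated.exists_comp_eq_of_comap {G : SimpleGraph V} {f : W → V} {c : V → ZMod 2}
    {d : W → ZMod 2} (h : FRelated (G.comap f) (c ∘ f) d) :
    ∃ c', FRelated G c c' ∧ c' ∘ f = d := by
  induction h with
  | refl => exact ⟨c, .refl, rfl⟩
  | tail _ hstep ih =>
    obtain ⟨c', hc', rfl⟩ := ih
    obtain ⟨i, hi, rfl⟩ := hstep
    exact ⟨push G (f i) c', hc'.tail ⟨f i, hi, rfl⟩, (push_comap G f i c').symm⟩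

end Lift

namespace DynkinD

variable {n : ℕ}

/-- Adjacency in `dynkinD` on the 0-based values `v.val`: the fork leaves are `0` and `1`, the
branch vertex is `2`, and the tail is `2, 3, …`. -/
def Adj (u v : ℕ) : Prop :=
  (u ≤ 1 ∧ v = 2) ∨ (v ≤ 1 ∧ u = 2) ∨ (2 ≤ u ∧ v = u + 1) ∨ (2 ≤ v ∧ u = v + 1)

lemma _root_.dynkinD_adj {u v : Fin n} : (dynkinD n).Adj u v ↔ Adj u v := by
  simp only [dynkinD, SimpleGraph.fromRel_adj, Ne, Fin.ext_iff, Adj]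
  omega

lemma _root_.dynkinD_comap_castSucc : (dynkinD (n + 1)).comap Fin.castSucc = dynkinD n := by
  ext u v
  simp only [SimpleGraph.comap_adj, dynkinD_adj, Fin.val_castSucc]

open Classical in
/-- Circlings given by a predicate on vertex values, so that configurations are checked by
`omega`; values `≥ n` are ignored. -/
noncomputable def circ (P : ℕ → Prop) : Fin n → ZMod 2 := fun v => if P v then 1 else 0

lemma circ_eq_one {P : ℕ → Prop} {v : Fin n} : circ P v = 1 ↔ P v := by
  unfold circ
  split_ifs with h <;> simp [h]

lemma eq_circ_iff {c : Fin n → ZMod 2} {P : ℕ → Prop} : c = circ P ↔ ∀ v, c v = 1 ↔ P v := by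
  refine ⟨fun h v => h ▸ circ_eq_one, fun h => funext fun v => ?_⟩
  have hv : c v = 1 ↔ circ P v = 1 := (h v).trans circ_eq_one.symm
  generalize c v = a at hv ⊢
  generalize circ P v = b at hv ⊢
  revert a b
  decide

lemma circ_congr {P Q : ℕ → Prop} (h : ∀ v < n, P v ↔ Q v) : circ (n := n) P = circ Q :=
  eq_circ_iff.2 fun v => circ_eq_one.trans (h v v.isLt)

lemma subsingleton_circ_eq (y : ℕ) : {v : Fin n | circ (· = y) v = 1}.Subsingleton :=
  fun _ hv _ hw => Fin.ext ((circ_eq_one.1 hv).trans (circ_eq_one.1 hw).symm)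

lemma frel_circ {P Q : ℕ → Prop} (i : ℕ) (hi : i < n) (hPi : P i)
    (hQ : ∀ v < n, Q v ↔ ¬(P v ↔ Adj i v)) : FRelated (dynkinD n) (circ P) (circ Q) := by
  refine .single ⟨⟨i, hi⟩, circ_eq_one.2 hPi, (eq_circ_iff.2 fun v => ?_).symm⟩
  have hQv := hQ v v.isLt
  have hadj : (dynkinD n).Adj ⟨i, hi⟩ v ↔ Adj i v := dynkinD_adj
  simp only [push, circ]
  split_ifs <;> simp_all

/-- Pushing the lower circle `k` of a pair `k, k + 1` on the tail toggles `k - 1` and `k + 1`,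
so the pair moves one step towards the branch vertex. -/
lemma frel_slide_pair {B : ℕ → Prop} {j k : ℕ} (hj : 2 ≤ j) (hjk : j ≤ k) (hk : k + 1 < n)
    (hB : ∀ v, j ≤ v → v ≤ k + 1 → ¬B v) :
    FRelated (dynkinD n) (circ fun v => B v ∨ v = k ∨ v = k + 1)
      (circ fun v => B v ∨ v = j ∨ v = j + 1) := by
  induction k, hjk using Nat.le_induction with
  | base => exact .refl
  | succ k hjk ih =>
    refine .trans (frel_circ (k + 1) (by omega) (by omega) fun v _ => ?_)
      (ih (by omega) fun v h1 h2 => hB v h1 (by omega))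
    by_cases hv : j ≤ v ∧ v ≤ k + 2
    · simp only [Adj, hB v hv.1 hv.2, false_or]
      omega
    · have hv' : v ≠ k ∧ v ≠ k + 1 ∧ v ≠ k + 1 + 1 ∧ ¬Adj (k + 1) v := by
        unfold Adj
        omega
      tauto

/-- Pushing the end `m` of the tail creates a pair `m - 1, m`, which then slides down to `j`. -/
lemma frel_end_to_pair {x j m : ℕ} (hj : 2 ≤ j) (hxj : x < j) (hjm : j ≤ m) :
    FRelated (dynkinD (m + 1)) (circ fun v => v = x ∨ v = m)
      (circ fun v => v = x ∨ v = j ∨ v = j + 1) := by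
  rcases hjm.eq_or_lt with rfl | hjm
  · rw [circ_congr fun v (hv : v < j + 1) =>
      show v = x ∨ v = j ↔ v = x ∨ v = j ∨ v = j + 1 by omega]
    exact .refl
  · exact .trans (frel_circ m (by omega) (by omega) fun v _ => by unfold Adj; omega)
      (frel_slide_pair (B := (· = x)) (k := m - 1) hj (by omega) (by omega)
        fun v h _ => by omega)

lemma exists_frel_circ_eq_of_pair {x m : ℕ} (hm : 2 ≤ m) (hxm : x < m) :
    ∃ y, FRelated (dynkinD (m + 1)) (circ fun v => v = x ∨ v = m) (circ (· = y)) := by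
  rcases Nat.lt_or_ge x 2 with hx | hx
  · -- `x` is a leaf of the fork; the pair stops at the branch vertex `2`, whose push moves
    -- the circle from `x` to the other leaf `1 - x`
    refine ⟨1 - x, (frel_end_to_pair le_rfl hx hm).trans <|
      (frel_circ 2 (by omega) (by omega) (Q := fun v => v = 1 - x ∨ v = 2) fun v _ => ?_).trans
        (frel_circ (1 - x) (by omega) (by omega) fun v _ => ?_)⟩
    all_goals (unfold Adj; omega)
  · refine ⟨x + 1, (frel_end_to_pair (j := x + 1) (by omega) (by omega) hxm).trans
      (frel_circ (x + 1) (by omega) (by omega) fun v _ => ?_)⟩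
    unfold Adj
    omega

lemma exists_frel_subsingleton_of_castSucc {m : ℕ} (hm : 2 ≤ m) (c : Fin (m + 1) → ZMod 2)
    (hc : {v | c (Fin.castSucc v) = 1}.Subsingleton) :
    ∃ c', FRelated (dynkinD (m + 1)) c c' ∧ {v | c' v = 1}.Subsingleton := by
  by_cases hlast : c (Fin.last m) = 1
  · rcases hc.eq_empty_or_singleton with hc | ⟨x, hx⟩
    · refine ⟨c, .refl, (Set.subsingleton_singleton (a := Fin.last m)).anti fun v hv => ?_⟩
      induction v using Fin.lastCases with
      | last => rfl
      | cast v => exact (hc.subset hv).elim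
    · have hcirc : c = circ fun v => v = x ∨ v = m := by
        refine eq_circ_iff.2 fun v => ?_
        induction v using Fin.lastCases with
        | last => simp [hlast]
        | cast v =>
          have hv : c v.castSucc = 1 ↔ v = x := Set.ext_iff.1 hx v
          simp [hv, Fin.ext_iff, v.isLt.ne]
      obtain ⟨y, hy⟩ := exists_frel_circ_eq_of_pair hm x.isLt
      exact ⟨_, hcirc ▸ hy, subsingleton_circ_eq y⟩
  · refine ⟨c, .refl, (hc.image Fin.castSucc).anti fun v hv => ?_⟩
    induction v using Fin.lastCases with
    | last => exact absurd hv hlast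
    | cast v => exact ⟨v, hv, rfl⟩

lemma exists_frel_subsingleton_three (c : Fin 3 → ZMod 2) :
    ∃ c', FRelated (dynkinD 3) c c' ∧ {v | c' v = 1}.Subsingleton := by
  by_cases hfork : c 0 = 1 ∧ c 1 = 1
  · have hall : FRelated (dynkinD 3) c (circ (· ≤ 2)) := by
      by_cases hc2 : c 2 = 1
      · have hc : c = circ (· ≤ 2) := eq_circ_iff.2 fun v => by fin_cases v <;> simp [hfork, hc2]
        exact hc ▸ .refl
      · have hc : c = circ (· ≤ 1) := eq_circ_iff.2 fun v => by fin_cases v <;> simp [hfork, hc2]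
        exact hc ▸ frel_circ 0 (by omega) (by omega) fun v _ => by unfold Adj; omega
    exact ⟨_, hall.trans (frel_circ 2 (by omega) (by omega) (Q := (· = 2)) fun v _ => by
      unfold Adj; omega), subsingleton_circ_eq 2⟩
  · refine exists_frel_subsingleton_of_castSucc le_rfl c fun v hv w hw => ?_
    fin_cases v <;> fin_cases w <;> simp_all

theorem exists_frel_subsingleton {n : ℕ} (hn : 3 ≤ n) (c : Fin n → ZMod 2) :
    ∃ c', FRelated (dynkinD n) c c' ∧ {v | c' v = 1}.Subsingleton := by
  induction n, hn using Nat.le_induction with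
  | base => exact exists_frel_subsingleton_three c
  | succ m hm ih =>
    obtain ⟨d, hd, hd1⟩ := ih (c ∘ Fin.castSucc)
    rw [← dynkinD_comap_castSucc] at hd
    obtain ⟨c₁, hc₁, rfl⟩ := hd.exists_comp_eq_of_comap
    obtain ⟨c₂, hc₂, hc₂1⟩ := exists_frel_subsingleton_of_castSucc (by omega) c₁ hd1
    exact ⟨c₂, hc₁.trans hc₂, hc₂1⟩

end DynkinD

/-- Push-the-button algorithm for type `D`: every circling on the Dynkin diagram of
type `D n` (`n ≥ 4`) is `F`-related to one with at most one circled vertex. -/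
theorem fRelated_ncard_le_one_dynkinD (n : ℕ) (hn : 4 ≤ n) (c : Fin n → ZMod 2) :
    ∃ c' : Fin n → ZMod 2, FRelated (dynkinD n) c c' ∧ {v | c' v = 1}.ncard ≤ 1 := by
  obtain ⟨c', hc', hsub⟩ := DynkinD.exists_frel_subsingleton (by omega) c
  exact ⟨c', hc', Set.ncard_le_one_iff_subsingleton.2 hsub⟩
end
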